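/- arXiv:0903.1879 — 4 statements merged into one kernel-verified Lean document; each statement's English description precedes it below -/
import Mathlib

section
/- Let F be a finite field and n ≥ 1. If E ⊆ F^n contains a line in every direction (i.e., for every nonzero v ∈ F^n there exists a ∈ F^n with {a + t·v : t ∈ F} ⊆ E), then |E| ≥ c_n |F|^n, where c_n = 1/n! suffices. -/
/-!
Dvir's polynomial method. If `|E| < C(q - 1 + n, n)`, the number of monomials of degree at most
`q - 1`, then some nonzero polynomial `P` of degree `d ≤ q - 1` vanishes on `E`. Restricted to a
line `a + t • v` contained in `E`, `P` becomes a polynomial in `t` of degree `≤ d < q` with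
`q` roots, hence zero; its `t ^ d`-coefficient is the top homogeneous component `P_d` evaluated
at `v`. So `P_d` vanishes at every direction, hence (being homogeneous) everywhere, contradicting `P_d ≠ 0` and
`d < q`. Finally `C(q - 1 + n, n) ≥ q ^ n / n!`.
-/

/-- Stars and bars with a slack variable at `none`. -/
def Fintype.optionSumEqEquivSumLe (σ : Type*) [Fintype σ] (m : ℕ) :
    {P : Option σ → ℕ // ∑ i, P i = m} ≃ {s : σ → ℕ // ∑ i, s i ≤ m} where
  toFun P := ⟨fun i => P.1 (some i), by
    have := P.2
    rw [Fintype.sum_option] at this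
    dsimp only
    omega⟩
  invFun s := ⟨fun o => o.elim (m - ∑ i, s.1 i) s.1, by
    have := s.2
    rw [Fintype.sum_option]
    simp only [Option.elim_none, Option.elim_some]
    omega⟩
  left_inv P := by
    have h := P.2
    rw [Fintype.sum_option] at h
    ext (_ | i)
    · simp only [Option.elim_none]
      omega
    · rfl
  right_inv s := rfl

theorem Finsupp.natCard_sum_le_eq_choose (σ : Type*) [Fintype σ] (m : ℕ) :
    Nat.card {s : σ →₀ ℕ | (s.sum fun _ e => e) ≤ m} =
      (m + Fintype.card σ).choose (Fintype.card σ) := by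
  classical
  have e : Sym (Option σ) m ≃ {s : σ →₀ ℕ | (s.sum fun _ e => e) ≤ m} :=
    (Sym.equivNatSumOfFintype (Option σ) m).trans <|
      (Fintype.optionSumEqEquivSumLe σ m).trans <|
        Finsupp.equivFunOnFinite.symm.subtypeEquiv fun s => by simp [Finsupp.sum_fintype]
  rw [← Nat.card_congr e, Sym.natCard_sym_eq_choose, Nat.card_eq_fintype_card,
    Fintype.card_option, Nat.add_right_comm, Nat.add_sub_cancel, add_comm, Nat.choose_symm_add]

theorem MvPolynomial.exists_ne_zero_totalDegree_le_forall_eval_eq_zero {σ F : Type*} [Field F]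
    (m : ℕ) (E : Set (σ → F)) [Finite E]
    (hE : E.ncard < Nat.card {s : σ →₀ ℕ | (s.sum fun _ e => e) ≤ m}) :
    ∃ P : MvPolynomial σ F, P ≠ 0 ∧ P.totalDegree ≤ m ∧ ∀ x ∈ E, eval x P = 0 := by
  cases nonempty_fintype E
  have : Finite {s : σ →₀ ℕ | (s.sum fun _ e => e) ≤ m} :=
    Nat.finite_of_card_ne_zero (by omega)
  let b : Module.Basis _ F (restrictTotalDegree σ F m) := basisRestrictSupport F _
  have : Module.Finite F (restrictTotalDegree σ F m) := Module.Finite.of_basis b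
  let evalOn : restrictTotalDegree σ F m →ₗ[F] (E → F) :=
    LinearMap.pi (fun x : E => (aeval x.1).toLinearMap) ∘ₗ (restrictTotalDegree σ F m).subtype
  have hdim : Module.finrank F (E → F) < Module.finrank F (restrictTotalDegree σ F m) := by
    rwa [Module.finrank_fintype_fun_eq_card, Module.finrank_eq_nat_card_basis b,
      Fintype.card_eq_nat_card, Nat.card_coe_set_eq]
  obtain ⟨P, hker, hP⟩ := Submodule.ne_bot_iff _ |>.mp (LinearMap.ker_ne_bot_of_finrank_lt hdim)
  refine ⟨P, by simpa using hP, (mem_restrictTotalDegree σ m _).mp P.2, fun x hx => ?_⟩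
  have hPx : evalOn P ⟨x, hx⟩ = 0 := by rw [LinearMap.mem_ker.mp hker]; rfl
  simpa [evalOn] using hPx

theorem Finsupp.card_toMultiset_eq_degree {σ : Type*} (s : σ →₀ ℕ) :
    Multiset.card s.toMultiset = s.degree :=
  s.card_toMultiset

theorem Finsupp.prod_pow_eq_prod_map_toMultiset {σ M : Type*} [CommMonoid M] (s : σ →₀ ℕ)
    (f : σ → M) : (s.prod fun i e => f i ^ e) = (s.toMultiset.map f).prod := by
  rw [Finsupp.toMultiset_map, Finsupp.prod_toMultiset,
    Finsupp.prod_mapDomain_index (fun _ => pow_zero _) (fun _ _ _ => pow_add _ _ _)]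

namespace MvPolynomial

section restrictLine

variable {σ R : Type*} [CommSemiring R] (a v : σ → R)

noncomputable def linePoly (i : σ) : Polynomial R :=
  Polynomial.C (a i) + Polynomial.C (v i) * Polynomial.X

theorem natDegree_linePoly_le (i : σ) : (linePoly a v i).natDegree ≤ 1 := by
  unfold linePoly
  compute_degree

theorem coeff_linePoly_one (i : σ) : (linePoly a v i).coeff 1 = v i := by
  simp [linePoly]

theorem eval_linePoly (t : R) : (fun i => (linePoly a v i).eval t) = a + t • v := by
  ext i
  simp only [linePoly, Polynomial.eval_add, Polynomial.eval_C, Polynomial.eval_mul,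
    Polynomial.eval_X, Pi.add_apply, Pi.smul_apply, smul_eq_mul, mul_comm]

noncomputable def restrictLine : MvPolynomial σ R →ₐ[R] Polynomial R :=
  aeval (linePoly a v)

theorem eval_restrictLine (P : MvPolynomial σ R) (t : R) :
    (restrictLine a v P).eval t = eval (a + t • v) P := by
  rw [restrictLine, ← Polynomial.coe_aeval_eq_eval, ← AlgHom.comp_apply, comp_aeval,
    aeval_eq_eval]
  exact congrArg (eval · P) (eval_linePoly a v t)

theorem restrictLine_monomial (s : σ →₀ ℕ) (c : R) :
    restrictLine a v (monomial s c) =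
      Polynomial.C c * (s.toMultiset.map (linePoly a v)).prod := by
  rw [restrictLine, aeval_monomial, Finsupp.prod_pow_eq_prod_map_toMultiset]
  rfl

theorem natDegree_le_one_of_mem_map_linePoly (s : σ →₀ ℕ) :
    ∀ p ∈ s.toMultiset.map (linePoly a v), p.natDegree ≤ 1 := by
  simpa only [Multiset.mem_map] using fun p ⟨i, _, hp⟩ => hp ▸ natDegree_linePoly_le a v i

theorem natDegree_restrictLine_monomial_le (s : σ →₀ ℕ) (c : R) :
    (restrictLine a v (monomial s c)).natDegree ≤ s.degree := by
  rw [restrictLine_monomial]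
  refine Polynomial.natDegree_C_mul_le _ _ |>.trans <|
    Polynomial.natDegree_multiset_prod_le _ |>.trans ?_
  have := Multiset.sum_le_card_nsmul ((s.toMultiset.map (linePoly a v)).map Polynomial.natDegree)
    1 fun d hd => by
      obtain ⟨p, hp, rfl⟩ := Multiset.mem_map.mp hd
      exact natDegree_le_one_of_mem_map_linePoly a v s p hp
  rwa [Multiset.card_map, Multiset.card_map, Finsupp.card_toMultiset_eq_degree, smul_eq_mul,
    mul_one] at this

theorem coeff_restrictLine_monomial (s : σ →₀ ℕ) (c : R) :
    (restrictLine a v (monomial s c)).coeff s.degree = c * s.prod fun i e => v i ^ e := by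
  have := Polynomial.coeff_multiset_prod_of_natDegree_le _ 1 <|
    natDegree_le_one_of_mem_map_linePoly a v s
  rw [Multiset.card_map, Finsupp.card_toMultiset_eq_degree, mul_one, Multiset.map_map] at this
  rw [restrictLine_monomial, Polynomial.coeff_C_mul, this,
    Finsupp.prod_pow_eq_prod_map_toMultiset]
  simp only [Function.comp_def, coeff_linePoly_one]

theorem restrictLine_eq_sum (P : MvPolynomial σ R) :
    restrictLine a v P = ∑ s ∈ P.support, restrictLine a v (monomial s (P.coeff s)) := by
  conv_lhs => rw [P.as_sum]
  exact map_sum _ _ _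

theorem natDegree_restrictLine_le (P : MvPolynomial σ R) :
    (restrictLine a v P).natDegree ≤ P.totalDegree := by
  rw [restrictLine_eq_sum]
  exact Polynomial.natDegree_sum_le_of_forall_le _ _ fun s hs =>
    (natDegree_restrictLine_monomial_le a v s _).trans (le_totalDegree hs)

theorem coeff_restrictLine_of_totalDegree_le {P : MvPolynomial σ R} {k : ℕ}
    (hk : P.totalDegree ≤ k) :
    (restrictLine a v P).coeff k = eval v (homogeneousComponent k P) := by
  classical
  rw [restrictLine_eq_sum, Polynomial.finsetSum_coeff, homogeneousComponent_apply, map_sum,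
    Finset.sum_filter]
  refine Finset.sum_congr rfl fun s hs => ?_
  split_ifs with hsk
  · rw [eval_monomial, ← hsk, coeff_restrictLine_monomial]
  · refine Polynomial.coeff_eq_zero_of_natDegree_lt <|
      (natDegree_restrictLine_monomial_le a v s _).trans_lt ?_
    exact lt_of_le_of_ne ((le_totalDegree hs).trans hk) hsk

end restrictLine

variable {σ R : Type*}

theorem homogeneousComponent_totalDegree_ne_zero [CommSemiring R] {P : MvPolynomial σ R}
    (hP : P ≠ 0) : homogeneousComponent P.totalDegree P ≠ 0 := by
  obtain ⟨s, hs, hsup⟩ :=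
    Finset.exists_mem_eq_sup P.support (support_nonempty.mpr hP) fun s => s.sum fun _ e => e
  have hdeg : s.degree = P.totalDegree := hsup.symm
  intro h
  have hcoeff := coeff_homogeneousComponent P.totalDegree P s
  rw [h, coeff_zero, if_pos hdeg] at hcoeff
  exact mem_support_iff.mp hs hcoeff.symm

open Cardinal in
theorem eval_homogeneousComponent_totalDegree_eq_zero [CommRing R] [IsDomain R]
    {P : MvPolynomial σ R} (hP : (P.totalDegree : Cardinal) < #R) {a v : σ → R}
    (hline : ∀ t : R, eval (a + t • v) P = 0) :
    eval v (homogeneousComponent P.totalDegree P) = 0 := by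
  have hzero : restrictLine a v P = 0 :=
    Polynomial.eq_zero_of_forall_eval_zero_of_natDegree_lt_card _
      (fun t => (eval_restrictLine a v P t).trans (hline t))
      (lt_of_le_of_lt (by exact_mod_cast natDegree_restrictLine_le a v P) hP)
  rw [← coeff_restrictLine_of_totalDegree_le a v le_rfl, hzero, Polynomial.coeff_zero]

open Cardinal in
theorem IsHomogeneous.eq_zero_of_forall_ne_zero_eval_eq_zero [CommRing R] [IsDomain R]
    [Nonempty σ] {H : MvPolynomial σ R} {d : ℕ} (hH : H.IsHomogeneous d)
    (h : ∀ v : σ → R, v ≠ 0 → eval v H = 0) (hd : (d : Cardinal) ≤ #R) : H = 0 := by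
  refine hH.eq_zero_of_forall_eval_eq_zero_of_le_card (fun v => ?_) hd
  obtain rfl | hv := eq_or_ne v 0
  · obtain rfl | hd0 := eq_or_ne d 0
    · have hC := totalDegree_eq_zero_iff_eq_C.mp (Nat.le_zero.mp hH.totalDegree_le)
      rw [hC] at h ⊢
      simpa using h 1 one_ne_zero
    · rw [eval_zero]
      exact hH.coeff_eq_zero (by simpa using hd0.symm)
  · exact h v hv

end MvPolynomial

def IsKakeyaSet {σ F : Type*} [Semiring F] (E : Set (σ → F)) : Prop :=
  ∀ v : σ → F, v ≠ 0 → ∃ a : σ → F, ∀ t : F, a + t • v ∈ E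

open MvPolynomial in
theorem IsKakeyaSet.choose_le_ncard {σ F : Type*} [Fintype σ] [Nonempty σ] [Field F] [Fintype F]
    {E : Set (σ → F)} (hE : IsKakeyaSet E) :
    (Fintype.card F - 1 + Fintype.card σ).choose (Fintype.card σ) ≤ E.ncard := by
  have hq : Fintype.card F - 1 < Fintype.card F := Nat.sub_lt Fintype.card_pos one_pos
  by_contra! hlt
  obtain ⟨P, hP, hdeg, hPE⟩ := exists_ne_zero_totalDegree_le_forall_eval_eq_zero
    (Fintype.card F - 1) E (by rwa [Finsupp.natCard_sum_le_eq_choose])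
  have hcard : (P.totalDegree : Cardinal) < Cardinal.mk F := by
    rw [Cardinal.mk_fintype]
    exact_mod_cast hdeg.trans_lt hq
  refine homogeneousComponent_totalDegree_ne_zero hP <|
    (homogeneousComponent_isHomogeneous _ P).eq_zero_of_forall_ne_zero_eval_eq_zero
      (fun v hv => ?_) hcard.le
  obtain ⟨a, ha⟩ := hE v hv
  exact eval_homogeneousComponent_totalDegree_eq_zero hcard fun t => hPE _ (ha t)

/-- **Kakeya set conjecture for `F^n`** (Dvir). If `E ⊆ F^n` contains a line in every
direction, then `|E| ≥ |F|^n / n!`. -/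
theorem kakeya_set_finite_field (n : ℕ) (hn : 1 ≤ n) (F : Type*) [Field F] [Fintype F]
    (E : Set (Fin n → F))
    (hE : ∀ v : Fin n → F, v ≠ 0 → ∃ a : Fin n → F, ∀ t : F, a + t • v ∈ E) :
    ((Fintype.card F : ℝ) ^ n) / (Nat.factorial n : ℝ) ≤ E.ncard := by
  have : Nonempty (Fin n) := ⟨⟨0, hn⟩⟩
  have hchoose := IsKakeyaSet.choose_le_ncard (E := E) hE
  rw [Fintype.card_fin] at hchoose
  have hq : Fintype.card F - 1 + n + 1 - n = Fintype.card F := by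
    have := Fintype.card_pos (α := F); omega
  calc ((Fintype.card F : ℝ) ^ n) / (Nat.factorial n : ℝ)
      = ((Fintype.card F - 1 + n + 1 - n : ℕ) : ℝ) ^ n / n.factorial := by rw [hq]
    _ ≤ (Fintype.card F - 1 + n).choose n := Nat.pow_le_choose _ _
    _ ≤ E.ncard := by exact_mod_cast hchoose
end

section
/- Let F be a finite field with q = |F| elements, let n ≥ 1, and let D ≥ 1. Let f : F^n → ℤ≥0. The F-vector space of polynomials in n variables over F of degree at most D that vanish to order at least f(v) at every point v ∈ F^n has codimension at most ∑_{v ∈ F^n} C(f(v)+n-1, n) in the space of all polynomials of degree at most D; in particular, if C(D+n, n) > ∑_{v ∈ F^n} C(f(v)+n-1, n), then there exists a nonzero polynomial of degree at most D vanishing to order at least f(v) at each v. -/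
/-!
The conditions defining `vanishingSpace` are the linear functionals `P ↦ coeff d (P (X + v))`
with `|d| < f v`; there are at most `C(f v + n - 1, n)` of them at each `v`, and by rank–nullity
a family of linear functionals cuts the dimension of a finite-dimensional space down by at most
its size. The counts come from the slack-variable bijection between exponents `d` in `n`
variables with `|d| ≤ N` and exponents in `n + 1` variables with `|d| = N`, i.e. multisets of
size `N` from `n + 1` letters; in particular `dim F[x]_{≤D} = C(D + n, n)`, so a strict
inequality forces a nonzero element of `vanishingSpace`.
-/

open MvPolynomial
open scoped BigOperators

noncomputable section

/-- The space of polynomials of total degree at most `D` vanishing to order at least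
`f v` at every point `v ∈ F^n` (i.e. all Taylor coefficients of degree `< f v` of
`P(x + v)` vanish). -/
def vanishingSpace (F : Type*) [Field F] [Fintype F] (n D : ℕ) (f : (Fin n → F) → ℕ) :
    Submodule F (MvPolynomial (Fin n) F) :=
  MvPolynomial.restrictTotalDegree (Fin n) F D ⊓
    ⨅ (v : Fin n → F), ⨅ (d : Fin n →₀ ℕ), ⨅ (_ : (∑ i, d i) < f v),
      LinearMap.ker ((MvPolynomial.lcoeff F d).comp
        (MvPolynomial.aeval (fun i => X i + C (v i)) :
          MvPolynomial (Fin n) F →ₐ[F] MvPolynomial (Fin n) F).toLinearMap)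

def sumLeEquivSumEqOption (σ : Type*) [Fintype σ] (N : ℕ) :
    {d : σ → ℕ // ∑ i, d i ≤ N} ≃ {P : Option σ → ℕ // ∑ i, P i = N} where
  toFun d := ⟨fun o => o.elim (N - ∑ i, d.1 i) d.1, by
    rw [Fintype.sum_option]; have := d.2; simp only [Option.elim]; omega⟩
  invFun P := ⟨fun i => P.1 (some i), by
    have := P.2; rw [Fintype.sum_option] at this; exact le_of_add_le_right this.le⟩
  left_inv d := rfl
  right_inv P := by
    have h := P.2
    rw [Fintype.sum_option] at h
    ext (_ | _)
    · simp only [Option.elim]; omega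
    · rfl

theorem Fintype.card_sum_le_eq_choose (σ : Type*) [Fintype σ] (N : ℕ) :
    Nat.card {d : σ → ℕ // ∑ i, d i ≤ N} = (N + Fintype.card σ).choose (Fintype.card σ) := by
  classical
  rw [Nat.card_congr ((sumLeEquivSumEqOption σ N).trans (Sym.equivNatSumOfFintype _ N).symm),
    Nat.card_eq_fintype_card, Sym.card_sym_eq_choose, Fintype.card_option,
    Nat.add_right_comm, Nat.add_sub_cancel, add_comm, Nat.choose_symm_add]

theorem Finsupp.card_degree_le_eq_choose (σ : Type*) [Fintype σ] (N : ℕ) :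
    Nat.card {d : σ →₀ ℕ // d.degree ≤ N} = (N + Fintype.card σ).choose (Fintype.card σ) := by
  rw [← Fintype.card_sum_le_eq_choose]
  exact Nat.card_congr (Finsupp.equivFunOnFinite.subtypeEquiv fun d => by
    rw [Finsupp.degree_eq_sum]; rfl)

theorem Finsupp.card_degree_lt_le_choose (σ : Type*) [Fintype σ] (m : ℕ) :
    Nat.card {d : σ →₀ ℕ // d.degree < m} ≤ (m + Fintype.card σ - 1).choose (Fintype.card σ) := by
  -- not an equality: for `m = 0` and empty `σ` the truncated subtraction makes the right side 1
  cases m with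
  | zero => simp
  | succ N =>
    rw [Nat.add_right_comm, Nat.add_sub_cancel, ← card_degree_le_eq_choose]
    exact (Nat.card_congr (Equiv.subtypeEquivRight fun d => Nat.lt_succ_iff)).le

theorem MvPolynomial.finrank_restrictTotalDegree (σ R : Type*) [Fintype σ] [CommSemiring R]
    [StrongRankCondition R] (N : ℕ) :
    Module.finrank R (restrictTotalDegree σ R N) =
      (N + Fintype.card σ).choose (Fintype.card σ) := by
  have : Finite {d : σ →₀ ℕ | d.degree ≤ N} := (Finsupp.finite_of_degree_le N).to_subtype
  rw [restrictTotalDegree, Module.finrank_eq_nat_card_basis (basisRestrictSupport R _)]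
  exact Finsupp.card_degree_le_eq_choose σ N

theorem Submodule.finrank_le_finrank_inf_iInf_ker_add_card {K V ι : Type*} [DivisionRing K]
    [AddCommGroup V] [Module K V] [Finite ι] (p : Submodule K V) [FiniteDimensional K p]
    (φ : ι → V →ₗ[K] K) :
    Module.finrank K p ≤ Module.finrank K ↥(p ⊓ ⨅ i, LinearMap.ker (φ i)) + Nat.card ι := by
  have := Fintype.ofFinite ι
  set L := (LinearMap.pi φ).domRestrict p
  have hker : LinearMap.ker L = (p ⊓ ⨅ i, LinearMap.ker (φ i)).comap p.subtype := by
    rw [LinearMap.ker_domRestrict, LinearMap.ker_pi, Submodule.comap_inf,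
      Submodule.comap_subtype_self, top_inf_eq]
  have hrange : Module.finrank K (LinearMap.range L) ≤ Nat.card ι := by
    calc _ ≤ Module.finrank K (ι → K) := Submodule.finrank_le _
      _ = Nat.card ι := by rw [Module.finrank_fintype_fun_eq_card, Nat.card_eq_fintype_card]
  rw [← L.finrank_range_add_finrank_ker, hker,
    (Submodule.comapSubtypeEquivOfLe inf_le_left).finrank_eq]
  omega

section
variable {F : Type*} [Field F] [Fintype F] {n D : ℕ} {f : (Fin n → F) → ℕ}

theorem mem_vanishingSpace {P : MvPolynomial (Fin n) F} :
    P ∈ vanishingSpace F n D f ↔ P.totalDegree ≤ D ∧ ∀ (v : Fin n → F) (d : Fin n →₀ ℕ),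
      (∑ i, d i) < f v → coeff d (aeval (fun i => X i + C (v i)) P) = 0 := by
  simp [vanishingSpace, mem_restrictTotalDegree]

theorem vanishingSpace_eq_inf_iInf_ker :
    vanishingSpace F n D f = restrictTotalDegree (Fin n) F D ⊓
      ⨅ t : (Σ v : Fin n → F, {d : Fin n →₀ ℕ // d.degree < f v}),
        LinearMap.ker ((lcoeff F t.2.1).comp
          (aeval (fun i => X i + C (t.1 i)) :
            MvPolynomial (Fin n) F →ₐ[F] MvPolynomial (Fin n) F).toLinearMap) := by
  simp only [vanishingSpace, iInf_sigma, iInf_subtype, Finsupp.degree_eq_sum]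

end

theorem vanishing_space_codim_general (F : Type) [Field F] [Fintype F] (n D : ℕ)
    (f : (Fin n → F) → ℕ) :
    Module.finrank F (MvPolynomial.restrictTotalDegree (Fin n) F D) ≤
      Module.finrank F (vanishingSpace F n D f) +
        ∑ v : Fin n → F, Nat.choose (f v + n - 1) n ∧
    ((∑ v : Fin n → F, Nat.choose (f v + n - 1) n) < Nat.choose (D + n) n →
      ∃ P : MvPolynomial (Fin n) F, P ≠ 0 ∧ P.totalDegree ≤ D ∧
        ∀ (v : Fin n → F) (d : Fin n →₀ ℕ), (∑ i, d i) < f v →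
          coeff d (MvPolynomial.aeval (fun i => X i + C (v i)) P) = 0) := by
  have (v : Fin n → F) : Finite {d : Fin n →₀ ℕ // d.degree < f v} :=
    (Finsupp.finite_of_degree_lt _).to_subtype
  have hconditions : Nat.card (Σ v : Fin n → F, {d : Fin n →₀ ℕ // d.degree < f v}) ≤
      ∑ v : Fin n → F, Nat.choose (f v + n - 1) n := by
    rw [Nat.card_sigma]
    exact Finset.sum_le_sum fun v _ => by
      simpa using Finsupp.card_degree_lt_le_choose (Fin n) (f v)
  have hcodim := Submodule.finrank_le_finrank_inf_iInf_ker_add_card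
    (restrictTotalDegree (Fin n) F D)
    fun t : (Σ v : Fin n → F, {d : Fin n →₀ ℕ // d.degree < f v}) =>
      (lcoeff F t.2.1).comp (aeval fun i => X i + C (t.1 i)).toLinearMap
  rw [← vanishingSpace_eq_inf_iInf_ker] at hcodim
  refine ⟨hcodim.trans (by gcongr), fun hlt => ?_⟩
  rw [finrank_restrictTotalDegree, Fintype.card_fin] at hcodim
  have hne : vanishingSpace F n D f ≠ ⊥ := fun h => by
    rw [h, finrank_bot] at hcodim
    omega
  obtain ⟨P, hP, hP0⟩ := Submodule.exists_mem_ne_zero_of_ne_bot hne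
  exact ⟨P, hP0, mem_vanishingSpace.mp hP⟩

/-- Vanishing to order `f v` at each `v` imposes at most `∑_v C(f(v)+n-1, n)` linear
conditions on the space of polynomials of degree at most `D`; in particular if
`C(D+n, n) > ∑_v C(f(v)+n-1, n)` there is a nonzero polynomial of degree at most `D`
vanishing to order at least `f v` at every `v`. -/
theorem vanishing_space_codim (F : Type) [Field F] [Fintype F] (n D : ℕ) (hn : 1 ≤ n)
    (hD : 1 ≤ D) (f : (Fin n → F) → ℕ) :
    Module.finrank F (MvPolynomial.restrictTotalDegree (Fin n) F D) ≤
      Module.finrank F (vanishingSpace F n D f) +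
        ∑ v : Fin n → F, Nat.choose (f v + n - 1) n ∧
    ((∑ v : Fin n → F, Nat.choose (f v + n - 1) n) < Nat.choose (D + n) n →
      ∃ P : MvPolynomial (Fin n) F, P ≠ 0 ∧ P.totalDegree ≤ D ∧
        ∀ (v : Fin n → F) (d : Fin n →₀ ℕ), (∑ i, d i) < f v →
          coeff d (MvPolynomial.aeval (fun i => X i + C (v i)) P) = 0) :=
  vanishing_space_codim_general F n D f
end
end

section
/- Let F be a finite field with q elements, k ≥ 1, and m ≥ 1. If Q is a polynomial in k variables over F of degree less than mq which vanishes to order at least m at every point of F^k, then Q = 0. -/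
/-!
Vanishing to order `m` at `v` means `Q ∈ 𝔪_v ^ m`, where `𝔪_v = (X_i - v_i)_i`. Distinct points
give coprime ideals, so `Q ∈ (∏_v 𝔪_v) ^ m ⊆ I ^ m`, where by the combinatorial Nullstellensatz
`I = (X_i ^ q - X_i)_i` contains every polynomial vanishing on `F^k`. Expand in the `q`-adic
monomials `X^e ∏ (X_i ^ q - X_i) ^ β_i` with all `e_i < q`: their leading exponents `e + q • β`
are pairwise distinct, and the elements of `I ^ m` only involve those with `|β| ≥ m`, so a
nonzero one has a monomial of degree at least `m * q`.
-/

open MvPolynomial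

theorem Ideal.prod_pow_eq_iInf_pow_of_pairwise_isCoprime {R ι : Type*} [CommRing R]
    {s : Finset ι} {J : ι → Ideal R} (hJ : (s : Set ι).Pairwise (Function.onFun IsCoprime J))
    (m : ℕ) : (∏ i ∈ s, J i) ^ m = ⨅ i ∈ s, J i ^ m := by
  rw [← Finset.prod_pow]
  exact Ideal.prod_eq_iInf_of_pairwise_isCoprime fun i hi j hj hij => (hJ hi hj hij).pow

theorem FiniteField.prod_univ_X_sub_C (K : Type*) [Field K] [Fintype K] :
    ∏ r : K, (Polynomial.X - Polynomial.C r) =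
      (Polynomial.X ^ Fintype.card K - Polynomial.X : Polynomial K) := by
  have hmonic : (Polynomial.X ^ Fintype.card K - Polynomial.X : Polynomial K).Monic :=
    Polynomial.monic_X_pow_sub (by rw [Polynomial.degree_X]; exact_mod_cast Fintype.one_lt_card)
  have h := Polynomial.prod_multiset_X_sub_C_of_monic_of_roots_card_eq hmonic <| by
    rw [roots_X_pow_card_sub_X, X_pow_card_sub_X_natDegree_eq K Fintype.one_lt_card]; rfl
  rwa [roots_X_pow_card_sub_X] at h

theorem Finsupp.add_nsmul_eq_add_nsmul_iff {σ : Type*} {q : ℕ} {e e' β β' : σ →₀ ℕ}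
    (he : ∀ i, e i < q) (he' : ∀ i, e' i < q) :
    e + q • β = e' + q • β' ↔ e = e' ∧ β = β' := by
  refine ⟨fun h => ?_, fun ⟨h₁, h₂⟩ => h₁ ▸ h₂ ▸ rfl⟩
  have hi (i : σ) : e i + q * β i = e' i + q * β' i := by simpa using DFunLike.congr_fun h i
  refine ⟨Finsupp.ext fun i => ?_, Finsupp.ext fun i => ?_⟩
  · simpa [Nat.add_mul_mod_self_left, Nat.mod_eq_of_lt (he i), Nat.mod_eq_of_lt (he' i)]
      using congrArg (· % q) (hi i)
  · have hq : 0 < q := (Nat.zero_le _).trans_lt (he i)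
    simpa [Nat.add_mul_div_left _ _ hq, Nat.div_eq_of_lt (he i), Nat.div_eq_of_lt (he' i)]
      using congrArg (· / q) (hi i)

namespace MonomialOrder

variable {σ R : Type*} [CommRing R] {ord : MonomialOrder σ}

theorem Monic.degree_mul [Nontrivial R] {f g : MvPolynomial σ R} (hf : ord.Monic f)
    (hg : ord.Monic g) : ord.degree (f * g) = ord.degree f + ord.degree g :=
  ord.degree_mul_of_isRegular_left (by rw [hf.leadingCoeff_eq_one]; exact isRegular_one)
    hg.ne_zero

theorem Monic.degree_pow [Nontrivial R] {f : MvPolynomial σ R} (hf : ord.Monic f) (n : ℕ) :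
    ord.degree (f ^ n) = n • ord.degree f :=
  ord.degree_pow_of_pow_leadingCoeff_ne_zero <| by
    rw [hf.leadingCoeff_eq_one, one_pow]; exact one_ne_zero

theorem exists_degree_mem_support_sum_smul (ord : MonomialOrder σ) {ι : Type*} {s : Finset ι}
    (hs : s.Nonempty) {c : ι → R} (hc : ∀ i ∈ s, c i ≠ 0) {b : ι → MvPolynomial σ R}
    (hb : ∀ i ∈ s, ord.Monic (b i)) (hinj : Set.InjOn (fun i => ord.degree (b i)) s) :
    ∃ i ∈ s, ord.degree (b i) ∈ (∑ j ∈ s, c j • b j).support := by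
  obtain ⟨i, hi, hmax⟩ := s.exists_max_image (fun i => ord.toSyn (ord.degree (b i))) hs
  refine ⟨i, hi, ?_⟩
  rw [mem_support_iff, coeff_sum, Finset.sum_eq_single i]
  · rw [coeff_smul, (hb i hi).coeff_degree, smul_eq_mul, mul_one]
    exact hc i hi
  · intro j hj hji
    rw [coeff_smul, ord.coeff_eq_zero_of_lt, smul_zero]
    exact lt_of_le_of_ne (hmax j hj) fun h => hji (hinj hj hi (ord.toSyn.injective h))
  · exact fun h => absurd hi h

end MonomialOrder

namespace MvPolynomial

section PointIdeal

variable {σ R : Type*} [CommRing R]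

theorem aeval_mem_pow_of_coeff_eq_zero {A : Type*} [CommRing A] [Algebra R A] {J : Ideal A}
    {x : σ → A} (hx : ∀ i, x i ∈ J) {m : ℕ} {P : MvPolynomial σ R}
    (hP : ∀ d : σ →₀ ℕ, d.degree < m → coeff d P = 0) : aeval x P ∈ J ^ m := by
  rw [P.as_sum, map_sum]
  refine Ideal.sum_mem _ fun d hd => ?_
  have hmd : m ≤ d.degree := not_lt.mp fun h => mem_support_iff.mp hd (hP d h)
  rw [aeval_monomial, Finsupp.prod]
  refine Ideal.mul_mem_left _ _ (Ideal.pow_le_pow_right hmd ?_)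
  rw [Finsupp.degree_apply, ← Finset.prod_pow_eq_pow_sum]
  exact Ideal.prod_mem_prod fun i _ => Ideal.pow_mem_pow (hx i) _

noncomputable def pointIdeal (v : σ → R) : Ideal (MvPolynomial σ R) :=
  Ideal.span (Set.range fun i => X i - C (v i))

theorem X_sub_C_mem_pointIdeal (v : σ → R) (i : σ) : X i - C (v i) ∈ pointIdeal v :=
  Ideal.subset_span ⟨i, rfl⟩

theorem mem_pointIdeal_pow_of_coeff_eq_zero {v : σ → R} {m : ℕ} {P : MvPolynomial σ R}
    (hP : ∀ d : σ →₀ ℕ, d.degree < m → coeff d (aeval (fun i => X i + C (v i)) P) = 0) :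
    P ∈ pointIdeal v ^ m := by
  have hinv : (aeval fun i => X i - C (v i)).comp (aeval fun i => X i + C (v i)) =
      AlgHom.id R (MvPolynomial σ R) := by
    ext i
    simp
  have := aeval_mem_pow_of_coeff_eq_zero (X_sub_C_mem_pointIdeal v) hP
  rwa [← AlgHom.comp_apply, hinv, AlgHom.id_apply] at this

theorem pointIdeal_le_ker_eval (v : σ → R) : pointIdeal v ≤ RingHom.ker (eval v) := by
  rw [pointIdeal, Ideal.span_le]
  rintro _ ⟨i, rfl⟩
  simp

theorem isCoprime_pointIdeal {F : Type*} [Field F] {v w : σ → F} (hvw : v ≠ w) :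
    IsCoprime (pointIdeal v) (pointIdeal w) := by
  obtain ⟨i, hi⟩ := Function.ne_iff.mp hvw
  have hunit : (X i - C (v i)) - (X i - C (w i)) = (C (w i - v i) : MvPolynomial σ F) := by
    rw [map_sub]; ring
  rw [Ideal.isCoprime_iff_exists]
  refine ⟨C (w i - v i)⁻¹ * (X i - C (v i)),
    Ideal.mul_mem_left _ _ (X_sub_C_mem_pointIdeal v i),
    -(C (w i - v i)⁻¹ * (X i - C (w i))),
    neg_mem (Ideal.mul_mem_left _ _ (X_sub_C_mem_pointIdeal w i)), ?_⟩
  rw [← sub_eq_add_neg, ← mul_sub, hunit, ← C_mul, inv_mul_cancel₀ (sub_ne_zero.mpr hi.symm),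
    C_1]

end PointIdeal

section FiniteField

variable {σ F : Type*} [Field F] [Fintype F]

theorem prod_univ_X_sub_C (i : σ) :
    ∏ r : F, (X i - C r : MvPolynomial σ F) = X i ^ Fintype.card F - X i := by
  simpa [map_prod, algebraMap_eq] using
    congrArg (Polynomial.aeval (X i : MvPolynomial σ F)) (FiniteField.prod_univ_X_sub_C F)

theorem mem_span_X_pow_card_sub_X_of_eval_eq_zero [Finite σ] {P : MvPolynomial σ F}
    (hP : ∀ v : σ → F, eval v P = 0) :
    P ∈ Ideal.span (Set.range fun i => X i ^ Fintype.card F - X i) := by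
  obtain ⟨h, -, rfl⟩ := combinatorial_nullstellensatz_exists_linearCombination
    (fun _ => Finset.univ) (fun _ => Finset.univ_nonempty) P (fun v _ => hP v)
  simp only [prod_univ_X_sub_C]
  rw [Ideal.span, ← Finsupp.range_linearCombination]
  exact LinearMap.mem_range_self _ h

theorem prod_pointIdeal_le_span_X_pow_card_sub_X [Fintype σ] [DecidableEq σ] :
    ∏ v : σ → F, pointIdeal v ≤ Ideal.span (Set.range fun i => X i ^ Fintype.card F - X i) :=
  fun _ hP => mem_span_X_pow_card_sub_X_of_eval_eq_zero fun v =>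
    pointIdeal_le_ker_eval v ((Ideal.prod_le_inf.trans (Finset.inf_le (Finset.mem_univ v))) hP)

end FiniteField

section QAdic

variable {σ R : Type*} [CommRing R] (ord : MonomialOrder σ) {q : ℕ}

theorem degree_X_lt_degree_X_pow [Nontrivial R] (hq : 1 < q) (i : σ) :
    ord.toSyn (ord.degree (X i : MvPolynomial σ R)) <
      ord.toSyn (ord.degree (X i ^ q : MvPolynomial σ R)) := by
  classical
  rw [ord.degree_X, X_pow_eq_monomial, ord.degree_monomial, if_neg one_ne_zero]
  exact ord.toSyn_strictMono (lt_of_le_of_ne (Finsupp.single_le_single.2 hq.le)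
    ((Finsupp.single_injective i).ne hq.ne))

theorem monic_X_pow_sub_X (hq : 1 < q) (i : σ) :
    ord.Monic (X i ^ q - X i : MvPolynomial σ R) := by
  nontriviality R
  exact (ord.leadingCoeff_sub_of_lt (degree_X_lt_degree_X_pow ord hq i)).trans ord.monic_X.pow

theorem degree_X_pow_sub_X [Nontrivial R] (hq : 1 < q) (i : σ) :
    ord.degree (X i ^ q - X i : MvPolynomial σ R) = Finsupp.single i q := by
  classical
  rw [ord.degree_sub_of_lt (degree_X_lt_degree_X_pow ord hq i), X_pow_eq_monomial,
    ord.degree_monomial, if_neg one_ne_zero]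

noncomputable def qAdicMonomial (q : ℕ) (e β : σ →₀ ℕ) : MvPolynomial σ R :=
  monomial e 1 * β.prod fun i n => (X i ^ q - X i) ^ n

theorem monic_qAdicMonomial (hq : 1 < q) (e β : σ →₀ ℕ) :
    ord.Monic (qAdicMonomial q e β : MvPolynomial σ R) :=
  ord.monic_monomial_one.mul <|
    MonomialOrder.Monic.prod fun i _ => (monic_X_pow_sub_X ord hq i).pow

theorem degree_qAdicMonomial [Nontrivial R] (hq : 1 < q) (e β : σ →₀ ℕ) :
    ord.degree (qAdicMonomial q e β : MvPolynomial σ R) = e + q • β := by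
  classical
  have hpow (i : σ) : ord.degree ((X i ^ q - X i : MvPolynomial σ R) ^ β i) =
      Finsupp.single i (β i * q) := by
    rw [(monic_X_pow_sub_X ord hq i).degree_pow, degree_X_pow_sub_X ord hq, Finsupp.smul_single,
      smul_eq_mul]
  rw [qAdicMonomial, Finsupp.prod, ord.monic_monomial_one.degree_mul
      (MonomialOrder.Monic.prod fun i _ => (monic_X_pow_sub_X ord hq i).pow),
    ord.degree_monomial, if_neg one_ne_zero,
    ord.degree_prod_of_regular fun i _ => by
      rw [(monic_X_pow_sub_X ord hq i).pow.leadingCoeff_eq_one]; exact isRegular_one]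
  congr 1
  ext j
  simp +contextual [hpow, Finsupp.single_apply, mul_comm]

theorem qAdicMonomial_add_single_right (q : ℕ) (e β : σ →₀ ℕ) (i : σ) :
    (qAdicMonomial q e (β + Finsupp.single i 1) : MvPolynomial σ R) =
      qAdicMonomial q e β * (X i ^ q - X i) := by
  rw [qAdicMonomial, qAdicMonomial, Finsupp.prod_add_index' (fun _ => pow_zero _)
      (fun _ _ _ => pow_add _ _ _),
    Finsupp.prod_single_index (h := fun j n => (X j ^ q - X j : MvPolynomial σ R) ^ n)
      (pow_zero _),
    pow_one, mul_assoc]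

theorem qAdicMonomial_add_single_left (q : ℕ) (e β : σ →₀ ℕ) (i : σ) :
    (qAdicMonomial q (e + Finsupp.single i q) β : MvPolynomial σ R) =
      qAdicMonomial q e (β + Finsupp.single i 1) +
        qAdicMonomial q (e + Finsupp.single i 1) β := by
  rw [qAdicMonomial_add_single_right, qAdicMonomial, qAdicMonomial, qAdicMonomial,
    monomial_add_single, monomial_add_single, pow_one]
  ring

theorem monomial_mul_qAdicMonomial (q : ℕ) (a e β : σ →₀ ℕ) (c : R) :
    monomial a c * qAdicMonomial q e β = c • qAdicMonomial q (a + e) β := by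
  rw [qAdicMonomial, qAdicMonomial, ← mul_assoc, monomial_mul, mul_one, smul_eq_C_mul,
    ← mul_assoc, C_mul_monomial, mul_one]

variable (R) in
def qAdicMonomials (q m : ℕ) : Set (MvPolynomial σ R) :=
  {p | ∃ e β : σ →₀ ℕ, (∀ i, e i < q) ∧ m ≤ β.degree ∧ p = qAdicMonomial q e β}

variable (R) in
noncomputable def qAdicSpan (q m : ℕ) : Submodule R (MvPolynomial σ R) :=
  Submodule.span R (qAdicMonomials R q m)

theorem qAdicMonomial_mem_qAdicSpan {m : ℕ} (hq : 1 < q) (e : σ →₀ ℕ) {β : σ →₀ ℕ}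
    (hβ : m ≤ β.degree) : (qAdicMonomial q e β : MvPolynomial σ R) ∈ qAdicSpan R q m := by
  induction h : e.degree using Nat.strong_induction_on generalizing e β with
  | _ n ih =>
  by_cases he : ∀ i, e i < q
  · exact Submodule.subset_span ⟨e, β, he, hβ, rfl⟩
  obtain ⟨i, hi⟩ := not_forall.mp he
  rw [not_lt] at hi
  obtain ⟨e', rfl⟩ : ∃ e', e = e' + Finsupp.single i q :=
    ⟨e - Finsupp.single i q, (tsub_add_cancel_of_le (Finsupp.single_le_iff.mpr hi)).symm⟩
  simp only [map_add, Finsupp.degree_single] at h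
  rw [qAdicMonomial_add_single_left]
  refine Submodule.add_mem _ (ih _ (by omega) e' ?_ rfl) (ih _ ?_ _ hβ rfl)
  · rw [map_add, Finsupp.degree_single]; omega
  · rw [map_add, Finsupp.degree_single]; omega

theorem mul_mem_qAdicSpan {m : ℕ} (hq : 1 < q) (g : MvPolynomial σ R) {p : MvPolynomial σ R}
    (hp : p ∈ qAdicSpan R q m) : g * p ∈ qAdicSpan R q m := by
  induction hp using Submodule.span_induction with
  | mem _ hx =>
    obtain ⟨e, β, -, hβ, rfl⟩ := hx
    induction g using MvPolynomial.induction_on' with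
    | monomial a c =>
      rw [monomial_mul_qAdicMonomial]
      exact Submodule.smul_mem _ _ (qAdicMonomial_mem_qAdicSpan hq _ hβ)
    | add g₁ g₂ h₁ h₂ => rw [add_mul]; exact Submodule.add_mem _ h₁ h₂
  | zero => rw [mul_zero]; exact Submodule.zero_mem _
  | add x y _ _ hx hy => rw [mul_add]; exact Submodule.add_mem _ hx hy
  | smul c x _ hx => rw [mul_smul_comm]; exact Submodule.smul_mem _ _ hx

theorem mul_X_pow_sub_X_mem_qAdicSpan {m : ℕ} (hq : 1 < q) (i : σ) {p : MvPolynomial σ R}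
    (hp : p ∈ qAdicSpan R q m) : p * (X i ^ q - X i) ∈ qAdicSpan R q (m + 1) := by
  induction hp using Submodule.span_induction with
  | mem _ hx =>
    obtain ⟨e, β, -, hβ, rfl⟩ := hx
    rw [← qAdicMonomial_add_single_right]
    exact qAdicMonomial_mem_qAdicSpan hq _ (by rw [map_add, Finsupp.degree_single]; omega)
  | zero => rw [zero_mul]; exact Submodule.zero_mem _
  | add x y _ _ hx hy => rw [add_mul]; exact Submodule.add_mem _ hx hy
  | smul c x _ hx => rw [smul_mul_assoc]; exact Submodule.smul_mem _ _ hx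

theorem mem_qAdicSpan_of_mem_pow (hq : 1 < q) {m : ℕ} {P : MvPolynomial σ R}
    (hP : P ∈ Ideal.span (Set.range fun i => (X i ^ q - X i : MvPolynomial σ R)) ^ m) :
    P ∈ qAdicSpan R q m := by
  induction m generalizing P with
  | zero =>
    have h1 : (qAdicMonomial q 0 0 : MvPolynomial σ R) = 1 := by simp [qAdicMonomial]
    simpa [h1] using mul_mem_qAdicSpan hq P (qAdicMonomial_mem_qAdicSpan (β := 0) hq 0 le_rfl)
  | succ m ih =>
    rw [pow_succ] at hP
    refine Submodule.mul_induction_on hP (fun r hr s hs => ?_) (fun _ _ => Submodule.add_mem _)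
    induction hs using Submodule.span_induction with
    | mem _ hx =>
      obtain ⟨i, rfl⟩ := hx
      exact mul_X_pow_sub_X_mem_qAdicSpan hq i (ih hr)
    | zero => rw [mul_zero]; exact Submodule.zero_mem _
    | add x y _ _ hx hy => rw [mul_add]; exact Submodule.add_mem _ hx hy
    | smul c x _ hx => rw [smul_eq_mul, mul_left_comm]; exact mul_mem_qAdicSpan hq c hx

theorem injOn_degree_qAdicMonomials [Nontrivial R] (hq : 1 < q) (m : ℕ) :
    Set.InjOn ord.degree (qAdicMonomials R q m : Set (MvPolynomial σ R)) := by
  rintro _ ⟨e, β, he, -, rfl⟩ _ ⟨e', β', he', -, rfl⟩ h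
  rw [degree_qAdicMonomial ord hq, degree_qAdicMonomial ord hq,
    Finsupp.add_nsmul_eq_add_nsmul_iff he he'] at h
  rw [h.1, h.2]

theorem le_totalDegree_of_mem_qAdicSpan [Nontrivial R] (hq : 1 < q) {m : ℕ}
    {P : MvPolynomial σ R} (hP : P ∈ qAdicSpan R q m) (h0 : P ≠ 0) : m * q ≤ P.totalDegree := by
  -- lex order for the reverse of a well-ordering of `σ`
  obtain ⟨ord⟩ : Nonempty (MonomialOrder σ) := by
    let : LinearOrder σ := WellOrderingRel.isWellOrder.linearOrder
    have : WellFoundedLT σ := ⟨WellOrderingRel.isWellOrder.wf⟩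
    exact ⟨(MonomialOrder.lex : MonomialOrder σᵒᵈ)⟩
  obtain ⟨c, hc, rfl⟩ := Submodule.mem_span_set.mp hP
  obtain ⟨p, hp, hsupp⟩ := ord.exists_degree_mem_support_sum_smul (b := id)
    (Finsupp.support_nonempty_iff.mpr (by rintro rfl; simp at h0))
    (fun _ => Finsupp.mem_support_iff.mp)
    (fun p hp => by obtain ⟨e, β, -, -, rfl⟩ := hc hp; exact monic_qAdicMonomial ord hq e β)
    ((injOn_degree_qAdicMonomials ord hq m).mono hc)
  obtain ⟨e, β, -, hβ, rfl⟩ := hc hp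
  calc m * q ≤ (e + q • β).degree := by
        rw [map_add, map_nsmul, smul_eq_mul, mul_comm]
        exact (Nat.mul_le_mul_left q hβ).trans (Nat.le_add_left _ _)
    _ ≤ _ := by
        rw [← degree_qAdicMonomial (R := R) ord hq]
        exact le_totalDegree hsupp

end QAdic

end MvPolynomial

theorem schwarz_zippel_multiplicity_general (F : Type*) [Field F] [Fintype F] (k m : ℕ)
    (Q : MvPolynomial (Fin k) F)
    (hdeg : Q.totalDegree < m * Fintype.card F)
    (hvan : ∀ (v : Fin k → F) (d : Fin k →₀ ℕ), (∑ i, d i) < m →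
      coeff d (MvPolynomial.aeval (fun i => X i + C (v i)) Q) = 0) :
    Q = 0 := by
  classical
  by_contra hQ
  have hq : 1 < Fintype.card F := Fintype.one_lt_card
  have hpow (v : Fin k → F) : Q ∈ pointIdeal v ^ m :=
    mem_pointIdeal_pow_of_coeff_eq_zero fun d hd => hvan v d (by rwa [← Finsupp.degree_eq_sum])
  have hprod : Q ∈ (∏ v : Fin k → F, pointIdeal v) ^ m := by
    rw [Ideal.prod_pow_eq_iInf_pow_of_pairwise_isCoprime fun v _ w _ => isCoprime_pointIdeal]
    simp only [Submodule.mem_iInf]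
    exact fun v _ => hpow v
  have hI := Ideal.pow_right_mono prod_pointIdeal_le_span_X_pow_card_sub_X m hprod
  have := le_totalDegree_of_mem_qAdicSpan hq (mem_qAdicSpan_of_mem_pow hq hI) hQ
  omega

/-- **Multiplicity Schwarz–Zippel**: a polynomial in `k` variables over a finite field `F`
with `q` elements, of degree less than `m·q`, vanishing to order at least `m` at every
point of `F^k`, is identically zero. -/
theorem schwarz_zippel_multiplicity (F : Type*) [Field F] [Fintype F] (k m : ℕ)
    (hk : 1 ≤ k) (hm : 1 ≤ m) (Q : MvPolynomial (Fin k) F)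
    (hdeg : Q.totalDegree < m * Fintype.card F)
    (hvan : ∀ (v : Fin k → F) (d : Fin k →₀ ℕ), (∑ i, d i) < m →
      coeff d (MvPolynomial.aeval (fun i => X i + C (v i)) Q) = 0) :
    Q = 0 :=
  schwarz_zippel_multiplicity_general F k m Q hdeg hvan
end

section
/- Let R = F[x]/(x^k), 𝔪 = (x), and let φ : R^n → F^{nk} be an F-linear isomorphism. For every nonzero v ∈ F^{nk} there exists v_0 ∈ R^n \ 𝔪^n such that φ^{-1}(v) ∈ R·v_0; consequently, if E ⊆ R^n contains a line a + R v_0 for every v_0 ∈ R^n \ 𝔪^n, then φ(E) ⊆ F^{nk} contains an F-line in every direction. -/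
/-- The ring `R = F[x]/(x^k)`. -/
abbrev QuotRing (F : Type*) [Field F] (k : ℕ) : Type _ :=
  Polynomial F ⧸ Ideal.span {(Polynomial.X : Polynomial F) ^ k}

/-- The maximal ideal `𝔪 = (x)` of `F[x]/(x^k)`. -/
noncomputable abbrev maxIdl (F : Type*) [Field F] (k : ℕ) : Ideal (QuotRing F k) :=
  Ideal.span {Ideal.Quotient.mk (Ideal.span {(Polynomial.X : Polynomial F) ^ k}) Polynomial.X}

/-!
Since `x` is nilpotent, a nonzero vector `u` over `F[x]/(x^k)` has a largest `m` with all
coordinates divisible by `x^m`; dividing out `x^m` leaves a vector `w` with a unit coordinate and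
`u = x^m w`. As `φ` is `F`-linear and `F ⊆ R`, the `R`-line `a + R w` is mapped onto a set
containing the `F`-line through `φ a` in direction `φ u`.
-/

theorem exists_eq_pow_mul_of_isNilpotent {R ι : Type*} [CommRing R] {x : R}
    (hx : IsNilpotent x) {u : ι → R} (hu : u ≠ 0) :
    ∃ w : ι → R, (∃ i, w i ∉ Ideal.span {x}) ∧ ∃ m : ℕ, u = fun i => x ^ m * w i := by
  classical
  have hP : ∃ m, ∃ i, u i ∉ Ideal.span {x ^ (m + 1)} := by
    obtain ⟨k, hk⟩ := hx
    obtain ⟨i, hi⟩ := Function.ne_iff.mp hu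
    exact ⟨k, i, by simpa [pow_succ, hk] using hi⟩
  set m := Nat.find hP
  obtain ⟨i₀, hi₀⟩ := Nat.find_spec hP
  have hdvd : ∀ i, u i ∈ Ideal.span {x ^ m} := by
    intro i
    rcases hm : m with _ | j
    · simp
    · by_contra h
      exact Nat.find_min hP (show j < m by omega) ⟨i, h⟩
  choose w hw using fun i => Ideal.mem_span_singleton'.mp (hdvd i)
  refine ⟨w, ⟨i₀, fun hmem => hi₀ ?_⟩, m, funext fun i => by rw [← hw i, mul_comm]⟩
  obtain ⟨c, hc⟩ := Ideal.mem_span_singleton'.mp hmem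
  exact Ideal.mem_span_singleton'.mpr ⟨c, by rw [← hw i₀, ← hc, pow_succ]; ring⟩

theorem add_smul_mem_image_of_forall_line_mem {F R V ι : Type*} [CommSemiring F]
    [CommSemiring R] [Algebra F R] [AddCommMonoid V] [Module F V] (φ : (ι → R) →ₗ[F] V)
    {E : Set (ι → R)} {a v₀ : ι → R} (hE : ∀ t : R, (fun i => a i + t * v₀ i) ∈ E)
    (t : R) (c : F) : φ a + c • φ (fun i => t * v₀ i) ∈ φ '' E := by
  refine ⟨_, hE (algebraMap F R c * t), ?_⟩
  rw [← map_smul, ← map_add]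
  congr 1
  funext i
  simp [Algebra.smul_def, mul_assoc]

theorem lift_directions_through_iso_general (F : Type) [Field F] (n k : ℕ)
    (φ : (Fin n → QuotRing F k) ≃ₗ[F] (Fin (n * k) → F)) :
    (∀ v : Fin (n * k) → F, v ≠ 0 →
      ∃ v₀ : Fin n → QuotRing F k, (∃ i, v₀ i ∉ maxIdl F k) ∧
        ∃ t : QuotRing F k, φ.symm v = fun i => t * v₀ i) ∧
    (∀ E : Set (Fin n → QuotRing F k),
      (∀ v₀ : Fin n → QuotRing F k, (∃ i, v₀ i ∉ maxIdl F k) →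
        ∃ a : Fin n → QuotRing F k, ∀ t : QuotRing F k, (fun i => a i + t * v₀ i) ∈ E) →
      ∀ v : Fin (n * k) → F, v ≠ 0 →
        ∃ w : Fin (n * k) → F, ∀ t : F, w + t • v ∈ φ '' E) := by
  have hx : IsNilpotent
      (Ideal.Quotient.mk (Ideal.span {(Polynomial.X : Polynomial F) ^ k}) Polynomial.X) :=
    ⟨k, by rw [← map_pow, Ideal.Quotient.eq_zero_iff_mem]; exact Ideal.subset_span rfl⟩
  have lift : ∀ v : Fin (n * k) → F, v ≠ 0 →
      ∃ v₀ : Fin n → QuotRing F k, (∃ i, v₀ i ∉ maxIdl F k) ∧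
        ∃ t : QuotRing F k, φ.symm v = fun i => t * v₀ i := fun v hv => by
    obtain ⟨w, hw, m, hu⟩ :=
      exists_eq_pow_mul_of_isNilpotent hx ((LinearEquiv.map_ne_zero_iff φ.symm).mpr hv)
    exact ⟨w, hw, _, hu⟩
  refine ⟨lift, fun E hE v hv => ?_⟩
  obtain ⟨v₀, hv₀, t, ht⟩ := lift v hv
  obtain ⟨a, ha⟩ := hE v₀ hv₀
  refine ⟨φ a, fun c => ?_⟩
  simpa [← ht] using add_smul_mem_image_of_forall_line_mem φ.toLinearMap ha t c

/-- Lifting directions through an `F`-linear isomorphism `φ : R^n ≃ F^{nk}` where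
`R = F[x]/(x^k)`: every nonzero `v ∈ F^{nk}` satisfies `φ⁻¹(v) ∈ R·v₀` for some
`v₀ ∈ R^n \ 𝔪^n`; consequently if `E ⊆ R^n` contains a line in every direction then
`φ(E)` contains an `F`-line in every direction. -/
theorem lift_directions_through_iso (F : Type) [Field F] (n k : ℕ) (hn : 1 ≤ n) (hk : 1 ≤ k)
    (φ : (Fin n → QuotRing F k) ≃ₗ[F] (Fin (n * k) → F)) :
    (∀ v : Fin (n * k) → F, v ≠ 0 →
      ∃ v₀ : Fin n → QuotRing F k, (∃ i, v₀ i ∉ maxIdl F k) ∧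
        ∃ t : QuotRing F k, φ.symm v = fun i => t * v₀ i) ∧
    (∀ E : Set (Fin n → QuotRing F k),
      (∀ v₀ : Fin n → QuotRing F k, (∃ i, v₀ i ∉ maxIdl F k) →
        ∃ a : Fin n → QuotRing F k, ∀ t : QuotRing F k, (fun i => a i + t * v₀ i) ∈ E) →
      ∀ v : Fin (n * k) → F, v ≠ 0 →
        ∃ w : Fin (n * k) → F, ∀ t : F, w + t • v ∈ φ '' E) :=
  lift_directions_through_iso_general F n k φ
end
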